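/- Let G be a simple graph on a finite vertex set and let i be a cut-vertex of G, i.e., the graph G − i obtained by deleting i has strictly more connected components than G. Then (G,i) allows the nullity pair (1,2); that is, there exists a matrix A ∈ 𝒮(G) with null(A) = 1 and null(A(i)) = 2. -/

import Mathlib

open Matrix

/-- The nullity of a square real matrix: the dimension of its kernel. -/
noncomputable def nullity {V : Type*} [Fintype V] (A : Matrix V V ℝ) : ℕ :=
  Module.finrank ℝ (LinearMap.ker A.mulVecLin)

/-- The principal submatrix of `A` obtained by deleting row and column `i`. -/
def deleteRC {V : Type*} (A : Matrix V V ℝ) (i : V) :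
    Matrix {v : V // v ≠ i} {v : V // v ≠ i} ℝ :=
  A.submatrix (fun v => (v : V)) (fun v => (v : V))

/-- `A` has the `i`-strong nullity interlacing property. -/
def HasSNIP {V : Type*} [Fintype V] [DecidableEq V] (A : Matrix V V ℝ) (i : V) : Prop :=
  ∀ X : Matrix V V ℝ, X.IsSymm → A.hadamard X = 0 →
    (1 : Matrix V V ℝ).hadamard X = 0 →
    (∀ r, r ≠ i → ∀ c, (A * X) r c = 0) → X = 0

/-- `A` has the strong Arnold property. -/
def HasSAP {V : Type*} [Fintype V] [DecidableEq V] (A : Matrix V V ℝ) : Prop :=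
  ∀ X : Matrix V V ℝ, X.IsSymm → A.hadamard X = 0 →
    (1 : Matrix V V ℝ).hadamard X = 0 → A * X = 0 → X = 0

/-- `A` belongs to `𝒮(G)`. -/
def InSG {V : Type*} (G : SimpleGraph V) (A : Matrix V V ℝ) : Prop :=
  A.IsSymm ∧ ∀ u v : V, u ≠ v → (A u v ≠ 0 ↔ G.Adj u v)

/-- `(G,i)` allows the nullity pair `(k,l)`. -/
def Allows {V : Type*} [Fintype V] [DecidableEq V] (G : SimpleGraph V) (i : V)
    (k l : ℕ) : Prop :=
  ∃ A : Matrix V V ℝ, InSG G A ∧ nullity A = k ∧ nullity (deleteRC A i) = l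

/-- `(G,i)` allows the nullity pair `(k,l)` with the SNIP. -/
def AllowsSNIP {V : Type*} [Fintype V] [DecidableEq V] (G : SimpleGraph V) (i : V)
    (k l : ℕ) : Prop :=
  ∃ A : Matrix V V ℝ, InSG G A ∧ nullity A = k ∧ nullity (deleteRC A i) = l ∧ HasSNIP A i



set_option linter.unusedSectionVars false

namespace Stmt17

open SimpleGraph Finset
open scoped Classical

variable {V : Type*} [Fintype V] [DecidableEq V]

/-- The graph `G - i`, with vertex type `{v : V // v ≠ i}`. -/
abbrev Gd (G : SimpleGraph V) (i : V) : SimpleGraph {v : V // v ≠ i} :=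
  SimpleGraph.induce {v : V | v ≠ i} G

lemma gd_adj (G : SimpleGraph V) (i : V) (u v : {v : V // v ≠ i}) :
    (Gd G i).Adj u v ↔ G.Adj ↑u ↑v := Iff.rfl

/-- indicator vector of a component -/
noncomputable def gv (G : SimpleGraph V) (i : V) (c : (Gd G i).ConnectedComponent) :
    {v : V // v ≠ i} → ℝ :=
  fun w => if (Gd G i).connectedComponentMk w = c then 1 else 0

noncomputable def rv (G : SimpleGraph V) (i : V) (c₁ c₂ : (Gd G i).ConnectedComponent) :
    {v : V // v ≠ i} → ℝ :=
  fun w => if (Gd G i).connectedComponentMk w ≠ c₁ ∧ (Gd G i).connectedComponentMk w ≠ c₂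
    then 1 else 0

noncomputable def Mm (G : SimpleGraph V) (i : V) (c₁ c₂ : (Gd G i).ConnectedComponent) :
    Matrix {v : V // v ≠ i} {v : V // v ≠ i} ℝ :=
  (Gd G i).lapMatrix ℝ + Matrix.diagonal (rv G i c₁ c₂)

noncomputable def bv (G : SimpleGraph V) (i : V) : {v : V // v ≠ i} → ℝ :=
  fun w => if G.Adj i ↑w then 1 else 0

noncomputable def dd (G : SimpleGraph V) (i : V) (c : (Gd G i).ConnectedComponent) : ℝ :=
  ∑ w, bv G i w * gv G i c w

noncomputable def Am (G : SimpleGraph V) (i : V) (c₁ c₂ : (Gd G i).ConnectedComponent) :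
    Matrix V V ℝ :=
  fun u v =>
    if hu : u = i then (if G.Adj i v then 1 else 0)
    else if hv : v = i then (if G.Adj i u then 1 else 0)
    else Mm G i c₁ c₂ ⟨u, hu⟩ ⟨v, hv⟩

noncomputable def x0 (G : SimpleGraph V) (i : V) (c₁ c₂ : (Gd G i).ConnectedComponent) :
    V → ℝ :=
  fun v => if hv : v = i then 0
    else dd G i c₂ * gv G i c₁ ⟨v, hv⟩ - dd G i c₁ * gv G i c₂ ⟨v, hv⟩

variable (G : SimpleGraph V) (i : V) (c₁ c₂ : (Gd G i).ConnectedComponent)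

lemma sum_split {M : Type*} [AddCommMonoid M] (f : V → M) :
    ∑ v, f v = f i + ∑ w : {v : V // v ≠ i}, f ↑w := by
  rw [← Finset.add_sum_erase _ f (Finset.mem_univ i)]
  congr 1
  rw [Finset.sum_subtype (p := fun v : V => v ≠ i) (Finset.univ.erase i)
    (fun v => by simp [Finset.mem_erase]) f]

lemma gv_mk_eq {w : {v : V // v ≠ i}} {c : (Gd G i).ConnectedComponent}
    (h : (Gd G i).connectedComponentMk w = c) : gv G i c w = 1 := by
  unfold gv; rw [if_pos h]

lemma gv_mk_ne {w : {v : V // v ≠ i}} {c : (Gd G i).ConnectedComponent}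
    (h : (Gd G i).connectedComponentMk w ≠ c) : gv G i c w = 0 := by
  unfold gv; rw [if_neg h]

lemma Mm_symm : (Mm G i c₁ c₂).IsSymm :=
  ((Gd G i).isSymm_lapMatrix (R := ℝ)).add (Matrix.isSymm_diagonal _)

lemma lap_mulVec_gv (c : (Gd G i).ConnectedComponent) :
    (Gd G i).lapMatrix ℝ *ᵥ gv G i c = 0 := by
  rw [lapMatrix_mulVec_eq_zero_iff_forall_reachable]
  intro a b hab
  unfold gv
  rw [ConnectedComponent.sound hab]

lemma rv_mul_gv (c : (Gd G i).ConnectedComponent) (h : c = c₁ ∨ c = c₂)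
    (w : {v : V // v ≠ i}) : rv G i c₁ c₂ w * gv G i c w = 0 := by
  unfold rv gv
  by_cases hw : (Gd G i).connectedComponentMk w = c
  · rcases h with rfl | rfl
    · rw [if_neg (by simp [hw])]; ring
    · rw [if_neg (by simp [hw])]; ring
  · rw [if_neg hw]; ring

lemma Mm_mulVec_gv (c : (Gd G i).ConnectedComponent) (h : c = c₁ ∨ c = c₂) :
    Mm G i c₁ c₂ *ᵥ gv G i c = 0 := by
  unfold Mm
  rw [Matrix.add_mulVec, lap_mulVec_gv]
  funext w
  simp only [Pi.add_apply, Pi.zero_apply, Matrix.mulVec_diagonal, zero_add]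
  exact rv_mul_gv G i c₁ c₂ c h w

lemma Mm_mulVec_eq_zero {x : {v : V // v ≠ i} → ℝ} (hne : c₁ ≠ c₂)
    (h : Mm G i c₁ c₂ *ᵥ x = 0) :
    ∃ a b : ℝ, x = a • gv G i c₁ + b • gv G i c₂ := by
  have hq : x ⬝ᵥ (Mm G i c₁ c₂ *ᵥ x) = 0 := by rw [h, dotProduct_zero]
  rw [Mm, Matrix.add_mulVec, dotProduct_add] at hq
  have h2 : x ⬝ᵥ (Matrix.diagonal (rv G i c₁ c₂) *ᵥ x) =
      ∑ w, rv G i c₁ c₂ w * (x w * x w) := by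
    simp only [dotProduct, Matrix.mulVec_diagonal]
    exact Finset.sum_congr rfl fun w _ => by ring
  have h1 : 0 ≤ x ⬝ᵥ ((Gd G i).lapMatrix ℝ *ᵥ x) := by
    have := (posSemidef_lapMatrix ℝ (Gd G i)).dotProduct_mulVec_nonneg x
    simpa using this
  have h2nonneg : ∀ w ∈ Finset.univ, 0 ≤ rv G i c₁ c₂ w * (x w * x w) := by
    intro w _
    have : (0:ℝ) ≤ rv G i c₁ c₂ w := by unfold rv; split_ifs <;> norm_num
    exact mul_nonneg this (mul_self_nonneg _)
  have h2' : 0 ≤ x ⬝ᵥ (Matrix.diagonal (rv G i c₁ c₂) *ᵥ x) := by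
    rw [h2]; exact Finset.sum_nonneg h2nonneg
  have hL0 : x ⬝ᵥ ((Gd G i).lapMatrix ℝ *ᵥ x) = 0 := by linarith
  have hD0 : ∑ w, rv G i c₁ c₂ w * (x w * x w) = 0 := by
    rw [← h2]; linarith
  have hreach : ∀ a b, (Gd G i).Reachable a b → x a = x b := by
    have := (lapMatrix_toLinearMap₂'_apply'_eq_zero_iff_forall_reachable (Gd G i) x).mp
      (by rw [Matrix.toLinearMap₂'_apply']; exact hL0)
    exact this
  have hzero : ∀ w, (Gd G i).connectedComponentMk w ≠ c₁ →
      (Gd G i).connectedComponentMk w ≠ c₂ → x w = 0 := by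
    intro w hw1 hw2
    have := (Finset.sum_eq_zero_iff_of_nonneg h2nonneg).mp hD0 w (Finset.mem_univ w)
    have hrv : rv G i c₁ c₂ w = 1 := by unfold rv; rw [if_pos ⟨hw1, hw2⟩]
    rw [hrv, one_mul] at this
    exact mul_self_eq_zero.mp this
  obtain ⟨u₁, hu₁⟩ : ∃ u, (Gd G i).connectedComponentMk u = c₁ := c₁.exists_rep
  obtain ⟨u₂, hu₂⟩ : ∃ u, (Gd G i).connectedComponentMk u = c₂ := c₂.exists_rep
  refine ⟨x u₁, x u₂, funext fun w => ?_⟩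
  simp only [Pi.add_apply, Pi.smul_apply, smul_eq_mul]
  by_cases hc1 : (Gd G i).connectedComponentMk w = c₁
  · rw [gv_mk_eq G i hc1, gv_mk_ne G i (by rw [hc1]; exact hne)]
    have : x w = x u₁ := hreach _ _ (ConnectedComponent.exact (by rw [hu₁, hc1])).symm
    rw [this]; ring
  · by_cases hc2 : (Gd G i).connectedComponentMk w = c₂
    · rw [gv_mk_eq G i hc2, gv_mk_ne G i hc1]
      have : x w = x u₂ := hreach _ _ (ConnectedComponent.exact (by rw [hu₂, hc2])).symm
      rw [this]; ring
    · rw [gv_mk_ne G i hc1, gv_mk_ne G i hc2, hzero w hc1 hc2]; ring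

lemma gv_li (hne : c₁ ≠ c₂) : LinearIndependent ℝ ![gv G i c₁, gv G i c₂] := by
  obtain ⟨u₁, hu₁⟩ : ∃ u, (Gd G i).connectedComponentMk u = c₁ := c₁.exists_rep
  obtain ⟨u₂, hu₂⟩ : ∃ u, (Gd G i).connectedComponentMk u = c₂ := c₂.exists_rep
  rw [LinearIndependent.pair_iff]
  intro s t hst
  have e1 := congrFun hst u₁
  have e2 := congrFun hst u₂
  simp only [Pi.add_apply, Pi.smul_apply, smul_eq_mul, Pi.zero_apply] at e1 e2
  rw [gv_mk_eq G i hu₁, gv_mk_ne G i (by rw [hu₁]; exact hne)] at e1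
  rw [gv_mk_ne G i (by rw [hu₂]; exact (Ne.symm hne)), gv_mk_eq G i hu₂] at e2
  constructor <;> [linarith; linarith]

lemma nullity_Mm (hne : c₁ ≠ c₂) :
    Module.finrank ℝ (LinearMap.ker (Mm G i c₁ c₂).mulVecLin) = 2 := by
  have hker : LinearMap.ker (Mm G i c₁ c₂).mulVecLin =
      Submodule.span ℝ (Set.range ![gv G i c₁, gv G i c₂]) := by
    ext x
    rw [LinearMap.mem_ker, Matrix.mulVecLin_apply]
    constructor
    · intro h
      obtain ⟨a, b, rfl⟩ := Mm_mulVec_eq_zero G i c₁ c₂ hne h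
      refine Submodule.add_mem _ (Submodule.smul_mem _ _ ?_) (Submodule.smul_mem _ _ ?_) <;>
        apply Submodule.subset_span
      · exact ⟨0, rfl⟩
      · exact ⟨1, rfl⟩
    · intro hx
      rw [Submodule.mem_span_range_iff_exists_fun ℝ] at hx
      obtain ⟨cf, rfl⟩ := hx
      rw [Fin.sum_univ_two]
      simp only [Matrix.cons_val_zero, Matrix.cons_val_one, Matrix.head_cons]
      rw [Matrix.mulVec_add, Matrix.mulVec_smul, Matrix.mulVec_smul,
        Mm_mulVec_gv G i c₁ c₂ c₁ (Or.inl rfl), Mm_mulVec_gv G i c₁ c₂ c₂ (Or.inr rfl)]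
      simp
  rw [hker, finrank_span_eq_card (gv_li G i c₁ c₂ hne), Fintype.card_fin]

lemma Am_i_i : Am G i c₁ c₂ i i = 0 := by
  unfold Am
  rw [dif_pos rfl, if_neg (G.irrefl)]

lemma Am_i_w (w : {v : V // v ≠ i}) : Am G i c₁ c₂ i ↑w = bv G i w := by
  unfold Am bv
  rw [dif_pos rfl]

lemma Am_w_i (w : {v : V // v ≠ i}) : Am G i c₁ c₂ ↑w i = bv G i w := by
  unfold Am bv
  rw [dif_neg w.2, dif_pos rfl]

lemma Am_w_w (w u : {v : V // v ≠ i}) : Am G i c₁ c₂ ↑w ↑u = Mm G i c₁ c₂ w u := by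
  unfold Am
  rw [dif_neg w.2, dif_neg u.2]

lemma Am_mulVec_ne (y : V → ℝ) (w : {v : V // v ≠ i}) :
    (Am G i c₁ c₂ *ᵥ y) ↑w = bv G i w * y i + (Mm G i c₁ c₂ *ᵥ fun u => y ↑u) w := by
  simp only [Matrix.mulVec, dotProduct]
  rw [sum_split i (fun v => Am G i c₁ c₂ ↑w v * y v)]
  congr 1
  · rw [Am_w_i]
  · exact Finset.sum_congr rfl fun u _ => by rw [Am_w_w]

lemma Am_mulVec_i (y : V → ℝ) :
    (Am G i c₁ c₂ *ᵥ y) i = ∑ w, bv G i w * y ↑w := by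
  simp only [Matrix.mulVec, dotProduct]
  rw [sum_split i (fun v => Am G i c₁ c₂ i v * y v), Am_i_i, zero_mul, zero_add]
  exact Finset.sum_congr rfl fun u _ => by rw [Am_i_w]

lemma deleteRC_Am : deleteRC (Am G i c₁ c₂) i = Mm G i c₁ c₂ := by
  ext w u
  exact Am_w_w G i c₁ c₂ w u

lemma Mm_off_diag {w w' : {v : V // v ≠ i}} (h : w ≠ w') :
    Mm G i c₁ c₂ w w' = if (Gd G i).Adj w w' then -1 else 0 := by
  unfold Mm lapMatrix degMatrix
  simp only [Matrix.add_apply, Matrix.sub_apply, Matrix.diagonal_apply_ne _ h,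
    adjMatrix_apply, add_zero]
  split_ifs <;> ring

lemma inSG_Am : InSG G (Am G i c₁ c₂) := by
  constructor
  · show (Am G i c₁ c₂)ᵀ = Am G i c₁ c₂
    ext u v
    rw [Matrix.transpose_apply]
    by_cases hu : u = i
    · rw [hu]
      by_cases hv : v = i
      · rw [hv]
      · rw [Am_w_i G i c₁ c₂ ⟨v, hv⟩, Am_i_w G i c₁ c₂ ⟨v, hv⟩]
    · by_cases hv : v = i
      · rw [hv]
        rw [Am_i_w G i c₁ c₂ ⟨u, hu⟩, Am_w_i G i c₁ c₂ ⟨u, hu⟩]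
      · rw [Am_w_w G i c₁ c₂ ⟨v, hv⟩ ⟨u, hu⟩, Am_w_w G i c₁ c₂ ⟨u, hu⟩ ⟨v, hv⟩]
        exact (Mm_symm G i c₁ c₂).apply _ _
  · intro u v huv
    by_cases hu : u = i
    · have huv' : v ≠ i := fun hc => huv (hu.trans hc.symm)
      rw [hu, show Am G i c₁ c₂ i v = bv G i ⟨v, huv'⟩ from Am_i_w G i c₁ c₂ ⟨v, huv'⟩]
      unfold bv
      split_ifs with h <;> simp [h]
    · by_cases hv : v = i
      · rw [hv, show Am G i c₁ c₂ u i = bv G i ⟨u, hu⟩ from Am_w_i G i c₁ c₂ ⟨u, hu⟩]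
        unfold bv
        rw [G.adj_comm]
        split_ifs with h <;> simp [h]
      · rw [show Am G i c₁ c₂ u v = Mm G i c₁ c₂ ⟨u, hu⟩ ⟨v, hv⟩ from
          Am_w_w G i c₁ c₂ ⟨u, hu⟩ ⟨v, hv⟩,
          Mm_off_diag G i c₁ c₂ (fun hc => huv (congrArg Subtype.val hc))]
        by_cases h : G.Adj u v
        · rw [if_pos (show (Gd G i).Adj ⟨u, hu⟩ ⟨v, hv⟩ from h)]
          simp [h]
        · rw [if_neg (show ¬ (Gd G i).Adj ⟨u, hu⟩ ⟨v, hv⟩ from h)]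
          simp [h]

lemma dd_pos {w : {v : V // v ≠ i}} (h : G.Adj i ↑w)
    {c : (Gd G i).ConnectedComponent} (hc : (Gd G i).connectedComponentMk w = c) :
    0 < dd G i c := by
  unfold dd
  apply Finset.sum_pos'
  · intro u _
    apply mul_nonneg
    · unfold bv; split_ifs <;> norm_num
    · unfold gv; split_ifs <;> norm_num
  · refine ⟨w, Finset.mem_univ w, ?_⟩
    unfold bv
    rw [if_pos h, gv_mk_eq G i hc]
    norm_num

lemma x0_i : x0 G i c₁ c₂ i = 0 := by unfold x0; rw [dif_pos rfl]

lemma x0_w (w : {v : V // v ≠ i}) :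
    x0 G i c₁ c₂ ↑w = dd G i c₂ * gv G i c₁ w - dd G i c₁ * gv G i c₂ w := by
  unfold x0
  rw [dif_neg w.2]

lemma bv_dot (a b : ℝ) :
    ∑ w, bv G i w * (a * gv G i c₁ w + b * gv G i c₂ w) = a * dd G i c₁ + b * dd G i c₂ := by
  unfold dd
  rw [Finset.mul_sum, Finset.mul_sum, ← Finset.sum_add_distrib]
  exact Finset.sum_congr rfl fun w _ => by ring

lemma Am_mulVec_x0 : Am G i c₁ c₂ *ᵥ x0 G i c₁ c₂ = 0 := by
  have hx0' : (fun u : {v : V // v ≠ i} => x0 G i c₁ c₂ ↑u) =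
      dd G i c₂ • gv G i c₁ - dd G i c₁ • gv G i c₂ := by
    funext u
    rw [x0_w]
    simp
  funext v
  by_cases hv : v = i
  · rw [hv, Am_mulVec_i]
    have : ∀ w, bv G i w * x0 G i c₁ c₂ ↑w =
        bv G i w * (dd G i c₂ * gv G i c₁ w + (-(dd G i c₁)) * gv G i c₂ w) := by
      intro w; rw [x0_w]; ring
    rw [Finset.sum_congr rfl fun w _ => this w, bv_dot]
    show dd G i c₂ * dd G i c₁ + -dd G i c₁ * dd G i c₂ = 0
    ring
  · have : v = ↑(⟨v, hv⟩ : {v : V // v ≠ i}) := rfl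
    rw [this, Am_mulVec_ne, hx0', x0_i, mul_zero, zero_add,
      Matrix.mulVec_sub, Matrix.mulVec_smul, Matrix.mulVec_smul,
      Mm_mulVec_gv G i c₁ c₂ c₁ (Or.inl rfl), Mm_mulVec_gv G i c₁ c₂ c₂ (Or.inr rfl)]
    simp

lemma ker_Am (hne : c₁ ≠ c₂) (hd₁ : 0 < dd G i c₁) (hd₂ : 0 < dd G i c₂) {y : V → ℝ}
    (h : Am G i c₁ c₂ *ᵥ y = 0) : ∃ s : ℝ, y = s • x0 G i c₁ c₂ := by
  set y' : {v : V // v ≠ i} → ℝ := fun u => y ↑u with hy'def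
  -- step 1 : y i = 0
  have hsum1 : ∑ w, gv G i c₁ w * ((Am G i c₁ c₂ *ᵥ y) ↑w) = 0 := by
    rw [h]; simp
  have hgm : ∑ w, gv G i c₁ w * ((Mm G i c₁ c₂ *ᵥ y') w) = 0 := by
    have : ∑ w, gv G i c₁ w * ((Mm G i c₁ c₂ *ᵥ y') w) = gv G i c₁ ⬝ᵥ (Mm G i c₁ c₂ *ᵥ y') :=
      rfl
    rw [this, Matrix.dotProduct_mulVec, ← Matrix.mulVec_transpose,
      (Mm_symm G i c₁ c₂).eq, Mm_mulVec_gv G i c₁ c₂ c₁ (Or.inl rfl), zero_dotProduct]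
  have hti : y i * dd G i c₁ = 0 := by
    have expand : ∑ w, gv G i c₁ w * ((Am G i c₁ c₂ *ᵥ y) ↑w) =
        y i * dd G i c₁ + ∑ w, gv G i c₁ w * ((Mm G i c₁ c₂ *ᵥ y') w) := by
      rw [Finset.sum_congr rfl fun w _ => by rw [Am_mulVec_ne G i c₁ c₂ y w]]
      unfold dd
      rw [Finset.mul_sum, ← Finset.sum_add_distrib]
      exact Finset.sum_congr rfl fun w _ => by ring
    rw [expand, hgm, add_zero] at hsum1
    exact hsum1
  have hyi : y i = 0 := by
    rcases mul_eq_zero.mp hti with h' | h'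
    · exact h'
    · exact absurd h' (ne_of_gt hd₁)
  -- step 2 : Mm *ᵥ y' = 0
  have hM : Mm G i c₁ c₂ *ᵥ y' = 0 := by
    funext w
    have := congrFun h ↑w
    rw [Am_mulVec_ne G i c₁ c₂ y w, hyi, mul_zero, zero_add] at this
    exact this
  obtain ⟨a, b, hy'⟩ := Mm_mulVec_eq_zero G i c₁ c₂ hne hM
  -- step 3 : row i
  have hrow : a * dd G i c₁ + b * dd G i c₂ = 0 := by
    have hi := congrFun h i
    rw [Am_mulVec_i] at hi
    have : ∀ w, bv G i w * y ↑w = bv G i w * (a * gv G i c₁ w + b * gv G i c₂ w) := by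
      intro w
      have := congrFun hy' w
      simp only [Pi.add_apply, Pi.smul_apply, smul_eq_mul] at this
      rw [show y (↑w) = y' w from rfl, this]
    rw [Finset.sum_congr rfl fun w _ => this w, bv_dot] at hi
    exact hi
  have hb : b = -(a * dd G i c₁) / dd G i c₂ := by
    field_simp
    linarith
  refine ⟨a / dd G i c₂, funext fun v => ?_⟩
  by_cases hv : v = i
  · rw [hv]
    simp [hyi, x0_i]
  · have hyv : y v = a * gv G i c₁ ⟨v, hv⟩ + b * gv G i c₂ ⟨v, hv⟩ := by
      have := congrFun hy' ⟨v, hv⟩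
      simpa using this
    have hx : x0 G i c₁ c₂ v =
        dd G i c₂ * gv G i c₁ ⟨v, hv⟩ - dd G i c₁ * gv G i c₂ ⟨v, hv⟩ :=
      x0_w G i c₁ c₂ ⟨v, hv⟩
    show y v = (a / dd G i c₂) * x0 G i c₁ c₂ v
    rw [hyv, hx, hb]
    field_simp
    ring
  
lemma nullity_Am (hne : c₁ ≠ c₂) (hd₁ : 0 < dd G i c₁) (hd₂ : 0 < dd G i c₂)
    {w₁ : {v : V // v ≠ i}} (hc₁ : (Gd G i).connectedComponentMk w₁ = c₁) :
    Module.finrank ℝ (LinearMap.ker (Am G i c₁ c₂).mulVecLin) = 1 := by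
  have hx0ne : x0 G i c₁ c₂ ≠ 0 := by
    intro h0
    have := congrFun h0 ↑w₁
    rw [x0_w, gv_mk_eq G i hc₁, gv_mk_ne G i (by rw [hc₁]; exact hne)] at this
    simp at this
    linarith
  have hker : LinearMap.ker (Am G i c₁ c₂).mulVecLin =
      Submodule.span ℝ {x0 G i c₁ c₂} := by
    ext y
    rw [LinearMap.mem_ker, Matrix.mulVecLin_apply, Submodule.mem_span_singleton]
    constructor
    · intro h
      obtain ⟨s, hs⟩ := ker_Am G i c₁ c₂ hne hd₁ hd₂ h
      exact ⟨s, hs.symm⟩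
    · rintro ⟨s, rfl⟩
      rw [Matrix.mulVec_smul, Am_mulVec_x0]
      simp
  rw [hker, finrank_span_singleton hx0ne]

lemma walk_aux : ∀ {a b : V} (p : G.Walk a b) (ha : a ≠ i) (hb : b ≠ i),
    (Gd G i).Reachable ⟨a, ha⟩ ⟨b, hb⟩ ∨
      ∃ w : {v : V // v ≠ i}, G.Adj i ↑w ∧ (Gd G i).Reachable ⟨a, ha⟩ w := by
  intro a b p
  induction p with
  | nil => intro ha hb; exact Or.inl (SimpleGraph.Reachable.refl _)
  | @cons u v b h q ih =>
    intro ha hb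
    by_cases hv : v = i
    · subst hv
      exact Or.inr ⟨⟨u, ha⟩, h.symm, SimpleGraph.Reachable.refl _⟩
    · have hadj : (Gd G i).Adj ⟨u, ha⟩ ⟨v, hv⟩ := h
      rcases ih hv hb with h' | ⟨w, hw, h'⟩
      · exact Or.inl (hadj.reachable.trans h')
      · exact Or.inr ⟨w, hw, hadj.reachable.trans h'⟩

lemma exists_two_components
    (hcut : Nat.card G.ConnectedComponent <
      Nat.card (SimpleGraph.induce {v : V | v ≠ i} G).ConnectedComponent) :
    ∃ (c₁ c₂ : (Gd G i).ConnectedComponent) (w₁ w₂ : {v : V // v ≠ i}),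
      c₁ ≠ c₂ ∧ G.Adj i ↑w₁ ∧ G.Adj i ↑w₂ ∧
        (Gd G i).connectedComponentMk w₁ = c₁ ∧ (Gd G i).connectedComponentMk w₂ = c₂ := by
  set φ : (Gd G i).ConnectedComponent → G.ConnectedComponent :=
    ConnectedComponent.map (SimpleGraph.Embedding.induce {v : V | v ≠ i}).toHom with hφdef
  have hninj : ¬ Function.Injective φ := by
    intro hinj
    exact absurd (Nat.card_le_card_of_injective φ hinj) (not_le.mpr hcut)
  obtain ⟨d₁, d₂, hdd, hne⟩ := Function.not_injective_iff.mp hninj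
  obtain ⟨u₁, hu₁⟩ : ∃ u, (Gd G i).connectedComponentMk u = d₁ := d₁.exists_rep
  obtain ⟨u₂, hu₂⟩ : ∃ u, (Gd G i).connectedComponentMk u = d₂ := d₂.exists_rep
  have hmk : G.connectedComponentMk ↑u₁ = G.connectedComponentMk ↑u₂ := by
    have h1 : φ d₁ = G.connectedComponentMk ↑u₁ := by
      rw [← hu₁, hφdef, ConnectedComponent.map_mk]; rfl
    have h2 : φ d₂ = G.connectedComponentMk ↑u₂ := by
      rw [← hu₂, hφdef, ConnectedComponent.map_mk]; rfl
    rw [← h1, ← h2, hdd]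
  have hr : G.Reachable ↑u₁ ↑u₂ := ConnectedComponent.exact hmk
  obtain ⟨p⟩ := hr
  have hnr : ¬ (Gd G i).Reachable ⟨↑u₁, u₁.2⟩ ⟨↑u₂, u₂.2⟩ := by
    intro hr'
    apply hne
    rw [← hu₁, ← hu₂]
    exact ConnectedComponent.sound hr'
  rcases walk_aux G i p u₁.2 u₂.2 with h' | ⟨w₁, hw₁, h₁⟩
  · exact absurd h' hnr
  rcases walk_aux G i p.reverse u₂.2 u₁.2 with h' | ⟨w₂, hw₂, h₂⟩
  · exact absurd h'.symm hnr
  refine ⟨d₁, d₂, w₁, w₂, hne, hw₁, hw₂, ?_, ?_⟩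
  · rw [← ConnectedComponent.sound h₁, ← hu₁]
  · rw [← ConnectedComponent.sound h₂, ← hu₂]

end Stmt17

/-- if `i` is a cut-vertex of `G`, then `(G,i)` allows the nullity
pair `(1,2)`. -/
theorem stmt17 {V : Type*} [Fintype V] [DecidableEq V] (G : SimpleGraph V) (i : V)
    (hcut : Nat.card G.ConnectedComponent <
      Nat.card (SimpleGraph.induce {v : V | v ≠ i} G).ConnectedComponent) :
    Allows G i 1 2 := by
  classical
  obtain ⟨c₁, c₂, w₁, w₂, hne, hw₁, hw₂, hc₁, hc₂⟩ := Stmt17.exists_two_components G i hcut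
  have hd₁ := Stmt17.dd_pos G i hw₁ hc₁
  have hd₂ := Stmt17.dd_pos G i hw₂ hc₂
  refine ⟨Stmt17.Am G i c₁ c₂, Stmt17.inSG_Am G i c₁ c₂, ?_, ?_⟩
  · show Module.finrank ℝ _ = 1
    exact Stmt17.nullity_Am G i c₁ c₂ hne hd₁ hd₂ hc₁
  · show Module.finrank ℝ _ = 2
    rw [Stmt17.deleteRC_Am]
    exact Stmt17.nullity_Mm G i c₁ c₂ hne
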